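/- With LayerNorm as defined (including centering by avg), for arbitrary a, b ∈ ℝ^d, ‖LayerNorm(a; γ) − LayerNorm(b; γ)‖ ≤ 4 (|γ₁|/|γ₂|) ‖a − b‖. -/

import Mathlib

/-!
The map `x ↦ x / (‖x‖ + c)` on a normed space is `2/c`-Lipschitz: writing the difference of the
images of `x` and `y` as `(x - y) / (‖x‖ + c)` plus `(1/(‖x‖ + c) - 1/(‖y‖ + c)) y`, each term is
at most `‖x - y‖ / c`, the second because `|‖x‖ - ‖y‖| ≤ ‖x - y‖` and `‖y‖ ≤ ‖y‖ + c`.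
Centering is linear and, since the mean vector is at most as long as the vector (Cauchy–Schwarz),
it at most doubles norms; composing gives the constant `2 · 2 |γ₁| / |γ₂|`.
-/

noncomputable section

/-- The constant vector whose entries all equal the mean of `v`. -/
def avg {d : ℕ} (v : EuclideanSpace ℝ (Fin d)) : EuclideanSpace ℝ (Fin d) :=
  WithLp.toLp 2 (fun _ => (∑ j, v j) / d)

/-- LayerNorm(v; γ) = γ₁ (v − avg v) / (‖v − avg v‖ + |γ₂|) + γ₃. -/
def layerNorm {d : ℕ} (γ₁ γ₂ : ℝ) (γ₃ : EuclideanSpace ℝ (Fin d))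
    (v : EuclideanSpace ℝ (Fin d)) : EuclideanSpace ℝ (Fin d) :=
  (γ₁ / (‖v - avg v‖ + |γ₂|)) • (v - avg v) + γ₃

theorem norm_inv_norm_add_smul_sub_le {E : Type*} [SeminormedAddCommGroup E] [NormedSpace ℝ E]
    {c : ℝ} (hc : 0 < c) (x y : E) :
    ‖(‖x‖ + c)⁻¹ • x - (‖y‖ + c)⁻¹ • y‖ ≤ 2 / c * ‖x - y‖ := by
  set p := ‖x‖ + c
  set q := ‖y‖ + c
  have hcp : c ≤ p := le_add_of_nonneg_left (norm_nonneg x)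
  have hp : 0 < p := hc.trans_le hcp
  have hq : 0 < q := by positivity
  have hyq : ‖y‖ ≤ q := le_add_of_nonneg_right hc.le
  have hsplit : p⁻¹ • x - q⁻¹ • y = p⁻¹ • (x - y) + (p⁻¹ - q⁻¹) • y := by
    rw [smul_sub, sub_smul]; abel
  have hfirst : ‖p⁻¹ • (x - y)‖ = ‖x - y‖ / p := by
    rw [norm_smul, norm_inv, Real.norm_of_nonneg hp.le, inv_mul_eq_div]
  have hsecond : ‖(p⁻¹ - q⁻¹) • y‖ ≤ ‖x - y‖ / p := by
    have hpq : |p⁻¹ - q⁻¹| = |‖x‖ - ‖y‖| / (p * q) := by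
      rw [inv_sub_inv hp.ne' hq.ne', abs_div, abs_of_pos (mul_pos hp hq), abs_sub_comm]
      congr 2; ring
    calc ‖(p⁻¹ - q⁻¹) • y‖ = |‖x‖ - ‖y‖| / (p * q) * ‖y‖ := by
          rw [norm_smul, Real.norm_eq_abs, hpq]
      _ ≤ ‖x - y‖ / (p * q) * q := by gcongr; exact abs_norm_sub_norm_le x y
      _ = ‖x - y‖ / p := by field_simp
  calc ‖p⁻¹ • x - q⁻¹ • y‖
      ≤ ‖p⁻¹ • (x - y)‖ + ‖(p⁻¹ - q⁻¹) • y‖ := hsplit ▸ norm_add_le _ _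
    _ ≤ ‖x - y‖ / p + ‖x - y‖ / p := add_le_add hfirst.le hsecond
    _ = 2 * ‖x - y‖ / p := by ring
    _ ≤ 2 * ‖x - y‖ / c := by gcongr
    _ = 2 / c * ‖x - y‖ := by ring

theorem avg_sub {d : ℕ} (a b : EuclideanSpace ℝ (Fin d)) : avg (a - b) = avg a - avg b := by
  ext i
  simp only [avg, PiLp.sub_apply, PiLp.toLp_apply, Finset.sum_sub_distrib, sub_div]

theorem norm_avg_sq {d : ℕ} (v : EuclideanSpace ℝ (Fin d)) :
    ‖avg v‖ ^ 2 = (∑ j, v j) ^ 2 / d := by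
  rw [EuclideanSpace.real_norm_sq_eq]
  simp only [avg, PiLp.toLp_apply, Finset.sum_const, Finset.card_univ, Fintype.card_fin,
    nsmul_eq_mul]
  rcases Nat.eq_zero_or_pos d with rfl | hd
  · simp
  · field_simp

theorem norm_avg_le {d : ℕ} (v : EuclideanSpace ℝ (Fin d)) : ‖avg v‖ ≤ ‖v‖ := by
  refine (pow_le_pow_iff_left₀ (norm_nonneg _) (norm_nonneg _) two_ne_zero).mp ?_
  rw [norm_avg_sq, EuclideanSpace.real_norm_sq_eq]
  refine div_le_of_le_mul₀ d.cast_nonneg (by positivity) ?_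
  simpa [mul_comm] using sq_sum_le_card_mul_sum_sq (s := Finset.univ) (f := v)

theorem norm_sub_avg_le {d : ℕ} (v : EuclideanSpace ℝ (Fin d)) : ‖v - avg v‖ ≤ 2 * ‖v‖ :=
  calc ‖v - avg v‖ ≤ ‖v‖ + ‖avg v‖ := norm_sub_le _ _
    _ ≤ 2 * ‖v‖ := by linarith [norm_avg_le v]

/-- LayerNorm is Lipschitz with constant `4|γ₁|/|γ₂|` on all of ℝ^d. -/
theorem layerNorm_lipschitz {d : ℕ}
    (γ₁ γ₂ : ℝ) (hγ₂ : γ₂ ≠ 0) (γ₃ : EuclideanSpace ℝ (Fin d))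
    (a b : EuclideanSpace ℝ (Fin d)) :
    ‖layerNorm γ₁ γ₂ γ₃ a - layerNorm γ₁ γ₂ γ₃ b‖
      ≤ 4 * (|γ₁| / |γ₂|) * ‖a - b‖ := by
  set x := a - avg a
  set y := b - avg b
  have hdiff : layerNorm γ₁ γ₂ γ₃ a - layerNorm γ₁ γ₂ γ₃ b
      = γ₁ • ((‖x‖ + |γ₂|)⁻¹ • x - (‖y‖ + |γ₂|)⁻¹ • y) := by
    simp only [layerNorm, div_eq_mul_inv, mul_smul, smul_sub, x, y]; abel
  have hxy : x - y = (a - b) - avg (a - b) := by simp only [x, y, avg_sub]; abel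
  calc ‖layerNorm γ₁ γ₂ γ₃ a - layerNorm γ₁ γ₂ γ₃ b‖
      ≤ |γ₁| * (2 / |γ₂| * ‖x - y‖) := by
        rw [hdiff, norm_smul, Real.norm_eq_abs]
        gcongr
        exact norm_inv_norm_add_smul_sub_le (abs_pos.mpr hγ₂) x y
    _ ≤ |γ₁| * (2 / |γ₂| * (2 * ‖a - b‖)) := by
        rw [hxy]; gcongr; exact norm_sub_avg_le _
    _ = 4 * (|γ₁| / |γ₂|) * ‖a - b‖ := by ring

end
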